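/- For every s ∈ ℝ, the linear map h : ℝ⁷ → ℝ⁷ defined by h(e₁) = e₃, h(e₂) = e₄, h(e₃) = e₁, h(e₄) = e₂, h(e₅) = −e₅, h(e₆) = −e₆, h(e₇) = e₇ is a Lie algebra isomorphism from g_s onto g_{−s} (i.e. h is bijective and h[u,v]_{g_s} = [h(u),h(v)]_{g_{−s}} for all u,v) which moreover preserves the G₂ 3-form: φ(h(u),h(v),h(w)) = φ(u,v,w) for all u,v,w ∈ ℝ⁷. In particular the G₂-structures (G_s, φ) and (G_{−s}, φ) are equivalent. -/

import Mathlib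

open scoped BigOperators

noncomputable section

/-- `Vn n` is `ℝⁿ`. -/
abbrev Vn (n : ℕ) := Fin n → ℝ

/-- The space of alternating `k`-forms on `ℝⁿ`. -/
abbrev AltForm (n k : ℕ) := AlternatingMap ℝ (Vn n) ℝ (Fin k)

/-- The wedge product of alternating forms (determinant/shuffle convention, so that
`e¹ ∧ ⋯ ∧ eᵏ` evaluated at `(e₁, …, e_k)` gives `1`). -/
def wedge {n p q : ℕ} (α : AltForm n p) (β : AltForm n q) : AltForm n (p + q) :=
  ((LinearMap.mul' ℝ ℝ).compAlternatingMap (α.domCoprod β)).domDomCongr finSumFinEquiv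

/-- A linear functional, viewed as a `1`-form. -/
def oneForm {n : ℕ} (f : Vn n →ₗ[ℝ] ℝ) : AltForm n 1 :=
  AlternatingMap.ofSubsingleton ℝ (Vn n) ℝ (0 : Fin 1) f

/-- The basis `1`-form `e^{i+1}` on `ℝⁿ` (`0`-indexed: `ef i` is dual to the
standard basis vector `e_i`). -/
def ef {n : ℕ} (i : Fin n) : AltForm n 1 := oneForm (LinearMap.proj i)

/-- The inner product on alternating `k`-forms on `ℝⁿ` for which the basis
`{e^{i₁} ∧ ⋯ ∧ e^{i_k} : i₁ < ⋯ < i_k}` is orthonormal. -/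
def formInner {n k : ℕ} (α β : AltForm n k) : ℝ :=
  (1 / (Nat.factorial k : ℝ)) *
    ∑ v : Fin k → Fin n,
      α (fun m => Pi.single (v m) (1 : ℝ)) * β (fun m => Pi.single (v m) (1 : ℝ))

/-- `θ(f)` acting on alternating `2`-forms: `(θ(f)α)(u,v) = -α(f u, v) - α(u, f v)`. -/
def theta2 {n : ℕ} (f : Vn n →ₗ[ℝ] Vn n) (α : AltForm n 2) : AltForm n 2 where
  toMultilinearMap :=
    -(α.toMultilinearMap.compLinearMap ![f, LinearMap.id]
      + α.toMultilinearMap.compLinearMap ![LinearMap.id, f])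
  map_eq_zero_of_eq' := by
    intro v i j hv hij
    have key : ∀ u : Vn n, α ![f u, u] + α ![u, f u] = 0 := by
      intro u
      have hs : (![u, f u] ∘ ⇑(Equiv.swap (0 : Fin 2) 1)) = ![f u, u] := by
        funext k
        fin_cases k <;> simp [Equiv.swap_apply_left, Equiv.swap_apply_right]
      have := AlternatingMap.map_swap α ![u, f u] (i := 0) (j := 1) (by decide)
      rw [hs] at this
      linarith
    have h1 : (fun k : Fin 2 => (![f, LinearMap.id] k) (v k)) = ![f (v 0), v 1] := by
      funext k; fin_cases k <;> simp
    have h2 : (fun k : Fin 2 => (![LinearMap.id, f] k) (v k)) = ![v 0, f (v 1)] := by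
      funext k; fin_cases k <;> simp
    have hv01 : v 0 = v 1 := by
      fin_cases i <;> fin_cases j <;> first | exact hv | exact hv.symm | exact absurd rfl hij
    show -(α.toMultilinearMap.compLinearMap ![f, LinearMap.id]
      + α.toMultilinearMap.compLinearMap ![LinearMap.id, f]) v = 0
    simp only [MultilinearMap.neg_apply, MultilinearMap.add_apply,
      MultilinearMap.compLinearMap_apply]
    rw [h1, h2, hv01]
    have hk := key (v 1)
    simp only [AlternatingMap.coe_multilinearMap] at *
    linarith

@[simp] lemma theta2_apply {n : ℕ} (f : Vn n →ₗ[ℝ] Vn n) (α : AltForm n 2)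
    (v : Fin 2 → Vn n) :
    theta2 f α v = -α ![f (v 0), v 1] - α ![v 0, f (v 1)] := by
  have h1 : (fun k : Fin 2 => (![f, LinearMap.id] k) (v k)) = ![f (v 0), v 1] := by
    funext k; fin_cases k <;> simp
  have h2 : (fun k : Fin 2 => (![LinearMap.id, f] k) (v k)) = ![v 0, f (v 1)] := by
    funext k; fin_cases k <;> simp
  show -(α.toMultilinearMap.compLinearMap ![f, LinearMap.id]
      + α.toMultilinearMap.compLinearMap ![LinearMap.id, f]) v = _
  simp only [MultilinearMap.neg_apply, MultilinearMap.add_apply,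
    MultilinearMap.compLinearMap_apply]
  rw [h1, h2]
  ring_nf
  simp [AlternatingMap.toMultilinearMap]

/-- `θ(f)` acting on `1`-forms: `θ(f)α = -α ∘ f`. -/
def theta1 {n : ℕ} (f : Vn n →ₗ[ℝ] Vn n) (α : AltForm n 1) : AltForm n 1 :=
  -(α.compLinearMap f)

/-- A `4 × 4` matrix, embedded as a `7 × 7` matrix acting on
`g₁ = span{e₃,e₄,e₅,e₆} = span of coordinates 2,3,4,5` and by zero on the rest. -/
def mat47 (M : Matrix (Fin 4) (Fin 4) ℝ) : Matrix (Fin 7) (Fin 7) ℝ :=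
  Matrix.of fun i j =>
    if h : 2 ≤ (i : ℕ) ∧ (i : ℕ) ≤ 5 ∧ 2 ≤ (j : ℕ) ∧ (j : ℕ) ≤ 5 then
      M ⟨(i : ℕ) - 2, by omega⟩ ⟨(j : ℕ) - 2, by omega⟩
    else 0

/-- The linear endomorphism of `ℝ⁷` determined by `M ∈ gl₄(ℝ)` acting on `g₁` (with
`M e_j = Σᵢ m_{ij} e_i`) and by zero on `span{e₁,e₂,e₇}`. -/
def ext47 (M : Matrix (Fin 4) (Fin 4) ℝ) : Vn 7 →ₗ[ℝ] Vn 7 :=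
  (mat47 M).mulVecLin

/-- wedge of two basis 1-forms (0-indexed). -/
def w2 (i j : Fin 7) : AltForm 7 2 := wedge (ef i) (ef j)

def w3 (i j k : Fin 7) : AltForm 7 3 := wedge (w2 i j) (ef k)

def w4 (i j k l : Fin 7) : AltForm 7 4 := wedge (w3 i j k) (ef l)

def w5 (i j k l m : Fin 7) : AltForm 7 5 := wedge (w4 i j k l) (ef m)

/-- The volume form `e¹²³⁴⁵⁶⁷` on `ℝ⁷`. -/
def vol7 : AltForm 7 7 := wedge (wedge (w5 0 1 2 3 4) (ef 5)) (ef 6)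

/-- The volume form `e¹²³⁴` on `ℝ⁴`. -/
def vol4 : AltForm 4 4 :=
  wedge (wedge (wedge (ef (0 : Fin 4)) (ef 1)) (ef 2)) (ef 3)

/-- `ω₇ = e³⁴ + e⁵⁶` (0-indexed coordinates 2,3,4,5). -/
def om7 : AltForm 7 2 := w2 2 3 + w2 4 5
/-- `ω₁ = e³⁵ - e⁴⁶`. -/
def om1 : AltForm 7 2 := w2 2 4 - w2 3 5
/-- `ω₂ = -e³⁶ - e⁴⁵`. -/
def om2 : AltForm 7 2 := -w2 2 5 - w2 3 4

/-- The `G₂`-structure `φ = e¹²⁷ + e³⁴⁷ + e⁵⁶⁷ + e¹³⁵ - e¹⁴⁶ - e²³⁶ - e²⁴⁵`. -/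
def phiG2 : AltForm 7 3 :=
  w3 0 1 6 + w3 2 3 6 + w3 4 5 6 + w3 0 2 4 - w3 0 3 5 - w3 1 2 5 - w3 1 3 4

/-- `ψ = ∗φ = e³⁴⁵⁶ + ω₇ ∧ e¹² + ω₁ ∧ e²⁷ - ω₂ ∧ e¹⁷`. -/
def psiG2 : AltForm 7 4 :=
  w4 2 3 4 5 + wedge om7 (w2 0 1) + wedge om1 (w2 1 6) - wedge om2 (w2 0 6)

/-- The value of the Chevalley–Eilenberg differential of a `(k+1)`-form `α` on the Lie
algebra `(ℝ⁷, br)` at a tuple of `k+2` vectors: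
`dα(v₀,…,v_{k+1}) = Σ_{i<j} (-1)^{i+j} α([v_i,v_j], v₀, …, v̂ᵢ, …, v̂ⱼ, …)`. -/
def dAt {k : ℕ} (br : Vn 7 → Vn 7 → Vn 7) (α : AltForm 7 (k + 1))
    (v : Fin (k + 2) → Vn 7) : ℝ :=
  ∑ j : Fin (k + 2), ∑ i : Fin (k + 2),
    if h : (i : ℕ) < (j : ℕ) then
      (-1 : ℝ) ^ ((i : ℕ) + (j : ℕ)) *
        α (Fin.cons (br (v i) (v j))
            (Fin.removeNth (⟨(i : ℕ), by omega⟩ : Fin (k + 1)) (Fin.removeNth j v)))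
    else 0

/-- The projection `ℝ⁷ → g₁ ≃ ℝ⁴` onto the coordinates 2,3,4,5. -/
def proj1 (u : Vn 7) : Vn 4 := fun k => u ⟨(k : ℕ) + 2, by omega⟩

/-- The inclusion `ℝ⁴ ≃ g₁ ⊆ ℝ⁷` as the coordinates 2,3,4,5. -/
def emb1 (u : Vn 4) : Vn 7 := fun i =>
  if h : 2 ≤ (i : ℕ) ∧ (i : ℕ) ≤ 5 then u ⟨(i : ℕ) - 2, by omega⟩ else 0

/-- The skew-symmetric bilinear bracket on `ℝ⁷` of the Lie algebra `g_{A₁,A,B,C}`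
(with `e₁,…,e₇` the standard basis, `0`-indexed as `e₁ = e 0, …, e₇ = e 6`):
`[e₇,e₁] = x e₁ + y e₂`, `[e₇,e₂] = z e₁ + w e₂`, `[e₁,e₂] = 0`,
`[e₇,e_j] = A e_j`, `[e₁,e_j] = B e_j`, `[e₂,e_j] = C e_j` for `e_j ∈ g₁`,
and `g₁ = span{e₃,e₄,e₅,e₆}` abelian. -/
def brABC (x y z w : ℝ) (A B C : Matrix (Fin 4) (Fin 4) ℝ) (u v : Vn 7) : Vn 7 :=
  (u 6 * v 0 - u 0 * v 6) •
      (x • (Pi.single (0 : Fin 7) (1 : ℝ) : Vn 7) + y • (Pi.single (1 : Fin 7) (1 : ℝ) : Vn 7))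
  + (u 6 * v 1 - u 1 * v 6) •
      (z • (Pi.single (0 : Fin 7) (1 : ℝ) : Vn 7) + w • (Pi.single (1 : Fin 7) (1 : ℝ) : Vn 7))
  + emb1 (A.mulVec (u 6 • proj1 v - v 6 • proj1 u)
      + B.mulVec (u 0 • proj1 v - v 0 • proj1 u)
      + C.mulVec (u 1 • proj1 v - v 1 • proj1 u))

/-- The diagonal entries of `ad e₇` on the Lie algebra `g_s`. -/
def dS (s : ℝ) : Fin 7 → ℝ :=
  ![3 / 8 + s, -1 / 8 + s, 3 / 8 - s, -1 / 8 - s, 1 / 4, 3 / 4, 0]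

/-- The bracket of the solvable Lie algebra `g_s`: nonzero brackets
`[e₁,e₃] = -e₆`, `[e₁,e₄] = -e₅`, `[e₂,e₃] = -e₅`, `[e₇,eᵢ] = (A_s)ᵢᵢ eᵢ`, with
`A_s = diag(3/8+s, -1/8+s, 3/8-s, -1/8-s, 1/4, 3/4)` (`0`-indexed: `eᵢ = e (i-1)`). -/
def brG (s : ℝ) (u v : Vn 7) : Vn 7 :=
  (u 2 * v 0 - u 0 * v 2) • (Pi.single (5 : Fin 7) (1 : ℝ) : Vn 7)
  + (u 3 * v 0 - u 0 * v 3) • (Pi.single (4 : Fin 7) (1 : ℝ) : Vn 7)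
  + (u 2 * v 1 - u 1 * v 2) • (Pi.single (4 : Fin 7) (1 : ℝ) : Vn 7)
  + (fun i => dS s i * (u 6 * v i - u i * v 6) : Vn 7)

/-- The diagonal entries of `ad e₇` on the Lie algebra `s_a`. -/
def dA (a : ℝ) : Fin 7 → ℝ :=
  ![(1 + 4 * a) / 4, (1 + 4 * a) / 4, (1 - 4 * a) / 4, (1 - 4 * a) / 4, 1 / 2, 1 / 2, 0]

/-- The bracket of the solvable Lie algebra `s_a`: nonzero brackets
`[e₁,e₃] = -e₆`, `[e₁,e₄] = -e₅`, `[e₂,e₃] = -e₅`, `[e₂,e₄] = e₆`,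
`[e₇,eᵢ] = (A_a)ᵢᵢ eᵢ`, with `A_a = (1/4)diag(1+4a, 1+4a, 1-4a, 1-4a, 2, 2)`. -/
def brA (a : ℝ) (u v : Vn 7) : Vn 7 :=
  (u 2 * v 0 - u 0 * v 2) • (Pi.single (5 : Fin 7) (1 : ℝ) : Vn 7)
  + (u 3 * v 0 - u 0 * v 3) • (Pi.single (4 : Fin 7) (1 : ℝ) : Vn 7)
  + (u 2 * v 1 - u 1 * v 2) • (Pi.single (4 : Fin 7) (1 : ℝ) : Vn 7)
  + (u 1 * v 3 - u 3 * v 1) • (Pi.single (5 : Fin 7) (1 : ℝ) : Vn 7)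
  + (fun i => dA a i * (u 6 * v i - u i * v 6) : Vn 7)

/-- The diagonal linear operator on `ℝ⁷` with diagonal entries `d`. -/
def dOp (d : Fin 7 → ℝ) : Vn 7 →ₗ[ℝ] Vn 7 where
  toFun u := fun i => d i * u i
  map_add' u v := by funext i; simp [mul_add]
  map_smul' c u := by funext i; simp [Pi.smul_apply, smul_eq_mul]; ring

/-- The torsion `2`-form `τ_s = (5-8s)/4 e¹² + (5+8s)/4 e³⁴ - (5/2) e⁵⁶`
of the closed `G₂`-structure `φ` on `g_s`. -/
def tauS (s : ℝ) : AltForm 7 2 :=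
  ((5 - 8 * s) / 4) • w2 0 1 + ((5 + 8 * s) / 4) • w2 2 3 + (-(5 / 2)) • w2 4 5

/-- The functional `F = scal²/|Ric|²` on the family `(G_s, φ)`. -/
def Fq (s : ℝ) : ℝ := (75 + 64 * s ^ 2) ^ 2 / (1725 + 4224 * s ^ 2 + 4096 * s ^ 4)

/-- The linear map `h : ℝ⁷ → ℝ⁷` with `h(e₁) = e₃`, `h(e₂) = e₄`, `h(e₃) = e₁`,
`h(e₄) = e₂`, `h(e₅) = -e₅`, `h(e₆) = -e₆`, `h(e₇) = e₇`. -/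
def hIso : Vn 7 →ₗ[ℝ] Vn 7 :=
  (!![0, 0, 1, 0, 0, 0, 0;
      0, 0, 0, 1, 0, 0, 0;
      1, 0, 0, 0, 0, 0, 0;
      0, 1, 0, 0, 0, 0, 0;
      0, 0, 0, 0, -1, 0, 0;
      0, 0, 0, 0, 0, -1, 0;
      0, 0, 0, 0, 0, 0, 1] : Matrix (Fin 7) (Fin 7) ℝ).mulVecLin

/-! `h` permutes the dual basis up to sign: `h*e¹ = e³`, `h*e² = e⁴`, `h*e³ = e¹`, `h*e⁴ = e²`,
`h*e⁵ = -e⁵`, `h*e⁶ = -e⁶`, `h*e⁷ = e⁷`, so it permutes the seven monomials of `φ` among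
themselves. It is an involution which exchanges the first two diagonal entries of `A_s` with
the next two, turning `A_s` into `A_{-s}`, and the sign change on `e₅, e₆` is compatible with
the three brackets `[e₁,e₃] = -e₆`, `[e₁,e₄] = -e₅`, `[e₂,e₃] = -e₅`. -/

lemma wedge_apply {n p q : ℕ} (α : AltForm n p) (β : AltForm n q) (v : Fin (p + q) → Vn n) :
    (p.factorial * q.factorial : ℝ) * wedge α β v =
      ∑ σ : Equiv.Perm (Fin p ⊕ Fin q), (Equiv.Perm.sign σ : ℝ) *
        (α (fun i => v (finSumFinEquiv (σ (Sum.inl i)))) *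
          β (fun i => v (finSumFinEquiv (σ (Sum.inr i))))) := by
  have h := congrArg (fun m => LinearMap.mul' ℝ ℝ (m (v ∘ finSumFinEquiv)))
    (MultilinearMap.domCoprod_alternization_eq α β)
  simp only [MultilinearMap.alternatization_apply, map_sum, MultilinearMap.domDomCongr_apply,
    MultilinearMap.domCoprod_apply, Fintype.card_fin, AlternatingMap.smul_apply, map_nsmul] at h
  rw [show wedge α β v = LinearMap.mul' ℝ ℝ (α.domCoprod β (v ∘ finSumFinEquiv)) from rfl,
    ← Nat.cast_mul, ← nsmul_eq_mul, ← h]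
  refine Finset.sum_congr rfl fun σ _ => ?_
  rw [LinearMap.map_smul_of_tower, LinearMap.mul'_apply, Units.smul_def, zsmul_eq_mul]
  rfl

lemma ef_apply {n : ℕ} (i : Fin n) (v : Fin 1 → Vn n) : ef i v = v 0 i := rfl

open Equiv in
lemma univ_perm_fin_one_sum_fin_one : (Finset.univ : Finset (Perm (Fin 1 ⊕ Fin 1))) =
    {1, swap (Sum.inl 0) (Sum.inr 0)} := by decide

open Equiv in
lemma univ_perm_fin_two_sum_fin_one : (Finset.univ : Finset (Perm (Fin 2 ⊕ Fin 1))) =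
    {1, swap (Sum.inl 0) (Sum.inl 1), swap (Sum.inl 0) (Sum.inr 0), swap (Sum.inl 1) (Sum.inr 0),
      swap (Sum.inl 0) (Sum.inl 1) * swap (Sum.inl 1) (Sum.inr 0),
      swap (Sum.inl 1) (Sum.inr 0) * swap (Sum.inl 0) (Sum.inl 1)} := by decide

lemma w2_apply (i j : Fin 7) (v : Fin 2 → Vn 7) :
    w2 i j v = v 0 i * v 1 j - v 1 i * v 0 j := by
  have h := wedge_apply (ef i) (ef j) v
  rw [univ_perm_fin_one_sum_fin_one, Finset.sum_pair (by decide)] at h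
  simp [ef_apply, finSumFinEquiv] at h
  rw [w2]
  linarith

lemma w3_apply (i j k : Fin 7) (v : Fin 3 → Vn 7) :
    w3 i j k v =
      v 0 i * v 1 j * v 2 k - v 1 i * v 0 j * v 2 k - v 2 i * v 1 j * v 0 k
        + v 1 i * v 2 j * v 0 k - v 0 i * v 2 j * v 1 k + v 2 i * v 0 j * v 1 k := by
  have h := wedge_apply (w2 i j) (ef k) v
  rw [univ_perm_fin_two_sum_fin_one, Finset.sum_insert (by decide), Finset.sum_insert (by decide),
    Finset.sum_insert (by decide), Finset.sum_insert (by decide), Finset.sum_pair (by decide)] at h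
  simp [w2_apply, ef_apply, Equiv.swap_apply_def, finSumFinEquiv] at h
  rw [w3]
  linarith

lemma hIso_apply (u : Vn 7) : hIso u = ![u 2, u 3, u 0, u 1, -u 4, -u 5, u 6] := by
  ext i
  fin_cases i <;> simp [hIso, Matrix.mulVec, dotProduct, Fin.sum_univ_succ]

lemma hIso_involutive : Function.Involutive hIso := by
  intro u
  ext i
  fin_cases i <;> simp [hIso_apply]

lemma hIso_brG (s : ℝ) (u v : Vn 7) : hIso (brG s u v) = brG (-s) (hIso u) (hIso v) := by
  ext i
  fin_cases i <;> simp [hIso_apply, brG, dS, -mul_eq_mul_left_iff, -mul_eq_mul_right_iff] <;> ring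

lemma phiG2_hIso (u v t : Vn 7) : phiG2 ![hIso u, hIso v, hIso t] = phiG2 ![u, v, t] := by
  simp only [phiG2, AlternatingMap.add_apply, AlternatingMap.sub_apply, w3_apply, hIso_apply,
    Matrix.cons_val', Matrix.cons_val_zero, Matrix.cons_val_fin_one, Matrix.cons_val_one,
    Matrix.cons_val]
  ring

/-- For every `s ∈ ℝ`, the map `h` is a Lie algebra isomorphism from
`g_s` onto `g_{-s}` preserving the `G₂` `3`-form `φ`; in particular `(G_s, φ)` and
`(G_{-s}, φ)` are equivalent. -/
theorem gs_equiv_gminus (s : ℝ) :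
    Function.Bijective hIso
    ∧ (∀ u v : Vn 7, hIso (brG s u v) = brG (-s) (hIso u) (hIso v))
    ∧ (∀ u v t : Vn 7, phiG2 ![hIso u, hIso v, hIso t] = phiG2 ![u, v, t]) :=
  ⟨hIso_involutive.bijective, hIso_brG s, phiG2_hIso⟩
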